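/- Let d ≥ 2 be an integer. A subset B ⊆ ℤ^d contains a set of return times of a minimal distal ℤ^d-system with the unique closing parallelepiped property if and only if B contains a d-joining of sets B₁,…,B_d ⊆ ℤ^{d−1}, where each B_i is a set of return times of a minimal distal ℤ^{d−1}-system. -/

import Mathlib

open Function Set

/-- The group of self-homeomorphisms of a topological space, under composition. -/
instance homeomorphGroup {X : Type*} [TopologicalSpace X] : Group (X ≃ₜ X) where
  mul f g := g.trans f
  one := Homeomorph.refl X
  inv := Homeomorph.symm
  mul_assoc _ _ _ := rfl
  one_mul _ := Homeomorph.ext fun _ => rfl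
  mul_one _ := Homeomorph.ext fun _ => rfl
  inv_mul_cancel f := Homeomorph.self_trans_symm f

variable {d : ℕ}

/-- The homeomorphism `T₁^{n₁ε₁} ⋯ T_d^{n_dε_d}` associated with `n ∈ ℤ^d` and a vertex
`ε ∈ {0,1}^d` of the cube. -/
def cubeMap {X : Type*} [TopologicalSpace X] (T : Fin d → X ≃ₜ X)
    (n : Fin d → ℤ) (ε : Fin d → Bool) : X ≃ₜ X :=
  ((List.finRange d).map (fun i => T i ^ (if ε i then n i else 0))).prod

/-- The space of directional dynamical cubes `Q_{T₁,…,T_d}(X)`. -/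
def cubes {X : Type*} [TopologicalSpace X] (T : Fin d → X ≃ₜ X) :
    Set ((Fin d → Bool) → X) :=
  closure {y | ∃ (x : X) (n : Fin d → ℤ), ∀ ε, y ε = cubeMap T n ε x}

/-- The group of homeomorphisms generated by `T₁,…,T_d`. -/
def genGroup {X : Type*} [TopologicalSpace X] (T : Fin d → X ≃ₜ X) : Subgroup (X ≃ₜ X) :=
  Subgroup.closure (Set.range T)

/-- Minimality: every orbit is dense. -/
def IsMinimalSystem {X : Type*} [TopologicalSpace X] (T : Fin d → X ≃ₜ X) : Prop :=
  ∀ x : X, Dense {y : X | ∃ g ∈ genGroup T, g x = y}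

/-- Distality: `inf_{g ∈ G} dist (g x) (g y) > 0` whenever `x ≠ y`. -/
def IsDistalSystem {X : Type*} [MetricSpace X] (T : Fin d → X ≃ₜ X) : Prop :=
  ∀ x y : X, x ≠ y → ∃ δ > 0, ∀ g ∈ genGroup T, δ ≤ dist (g x) (g y)

/-- Unique closing parallelepiped property: two cubes agreeing in `2^d - 1` of their
coordinates are equal. -/
def HasUCP {X : Type*} [TopologicalSpace X] (T : Fin d → X ≃ₜ X) : Prop :=
  ∀ x ∈ cubes T, ∀ y ∈ cubes T,
    ∀ ε₀ : Fin d → Bool, (∀ ε, ε ≠ ε₀ → x ε = y ε) → x = y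

/-- A `ℤ^d`-system: a compact metric space together with `d` pairwise commuting
homeomorphisms. -/
structure ZdSys (d : ℕ) where
  X : Type
  [ms : MetricSpace X]
  [cs : CompactSpace X]
  T : Fin d → X ≃ₜ X
  comm : ∀ i j : Fin d, ∀ x : X, T i (T j x) = T j (T i x)

attribute [instance] ZdSys.ms ZdSys.cs

/-- The set of return times `N_{T₁,…,T_d}(x,U) = {n ∈ ℤ^d : T₁^{n₁}⋯T_d^{n_d} x ∈ U}`. -/
def returnTimes {d : ℕ} (S : ZdSys d) (x : S.X) (U : Set S.X) : Set (Fin d → ℤ) :=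
  {n | cubeMap S.T n (fun _ => true) x ∈ U}

/-!
If `T` has the unique closing parallelepiped property, a compactness argument shows that the vertex
`T^n x` of the cube `(T^{n·ε} x)_ε` is forced into `U` as soon as all other vertices lie in
suitable neighbourhoods `V ε` of `x`. Every other vertex `ε` misses some direction `i`, so it only
depends on `n` with its `i`-th coordinate deleted; and the simultaneous returns of `x` to the `V ε`
along the faces missing `i` are the return times of a minimal distal `ℤ^{d-1}`-system, the orbit
closure of the diagonal in a product of copies of `X` (in a distal system orbit closures are
minimal, by an idempotent of the Ellis semigroup).

Conversely, given systems `Y_i` with return time sets `B_i`, let `ℤ^d` act on `∏ Y_i` with the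
`i`-th direction acting trivially on `Y_i`. The orbit closure of `(x_i)` is minimal and distal, its
return times to `∏ U_i` lie in the joining, and it has the unique closing parallelepiped property
because flipping the `i`-th bit of a vertex of a cube does not change its `i`-th coordinate.
-/

section Semiconj

variable {X Y : Type*} [TopologicalSpace X] [TopologicalSpace Y] {k : ℕ}

def semiconjSubgroup (e : X → Y) : Subgroup ((X ≃ₜ X) × (Y ≃ₜ Y)) where
  carrier := {p | Semiconj e p.1 p.2}
  mul_mem' hp hq := hp.comp_right hq
  one_mem' := Semiconj.id_right
  inv_mem' {p} hp := hp.inverses_right p.1.apply_symm_apply p.2.symm_apply_apply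

def pairGroup (T : Fin k → X ≃ₜ X) (T' : Fin k → Y ≃ₜ Y) : Subgroup ((X ≃ₜ X) × (Y ≃ₜ Y)) :=
  Subgroup.closure (range fun j => (T j, T' j))

lemma map_fst_pairGroup (T : Fin k → X ≃ₜ X) (T' : Fin k → Y ≃ₜ Y) :
    (pairGroup T T').map (MonoidHom.fst _ _) = genGroup T := by
  rw [pairGroup, MonoidHom.map_closure, ← range_comp]
  rfl

lemma map_snd_pairGroup (T : Fin k → X ≃ₜ X) (T' : Fin k → Y ≃ₜ Y) :
    (pairGroup T T').map (MonoidHom.snd _ _) = genGroup T' := by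
  rw [pairGroup, MonoidHom.map_closure, ← range_comp]
  rfl

variable {e : X → Y} {T : Fin k → X ≃ₜ X} {T' : Fin k → Y ≃ₜ Y}

lemma pairGroup_le_semiconjSubgroup (h : ∀ j, Semiconj e (T j) (T' j)) :
    pairGroup T T' ≤ semiconjSubgroup e :=
  (Subgroup.closure_le _).2 (range_subset_iff.2 h)

lemma exists_semiconj_of_mem_genGroup (h : ∀ j, Semiconj e (T j) (T' j)) {g : X ≃ₜ X}
    (hg : g ∈ genGroup T) : ∃ g' ∈ genGroup T', Semiconj e g g' := by
  rw [← map_fst_pairGroup T T'] at hg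
  obtain ⟨p, hp, rfl⟩ := hg
  exact ⟨p.2, map_snd_pairGroup T T' ▸ ⟨p, hp, rfl⟩, pairGroup_le_semiconjSubgroup h hp⟩

lemma exists_semiconj_of_mem_genGroup_right (h : ∀ j, Semiconj e (T j) (T' j)) {g' : Y ≃ₜ Y}
    (hg' : g' ∈ genGroup T') : ∃ g ∈ genGroup T, Semiconj e g g' := by
  rw [← map_snd_pairGroup T T'] at hg'
  obtain ⟨p, hp, rfl⟩ := hg'
  exact ⟨p.1, map_fst_pairGroup T T' ▸ ⟨p, hp, rfl⟩, pairGroup_le_semiconjSubgroup h hp⟩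

lemma Function.Semiconj.cubeMap (h : ∀ j, Semiconj e (T j) (T' j)) (n : Fin k → ℤ)
    (ε : Fin k → Bool) : Semiconj e (cubeMap T n ε) (cubeMap T' n ε) := by
  let P := ((List.finRange k).map fun j => (T j, T' j) ^ (if ε j then n j else 0)).prod
  have hP : P ∈ semiconjSubgroup e := (semiconjSubgroup e).list_prod_mem <| by
    rintro _ hp
    obtain ⟨j, -, rfl⟩ := List.mem_map.1 hp
    exact zpow_mem (pairGroup_le_semiconjSubgroup h (Subgroup.subset_closure ⟨j, rfl⟩)) _
  have hfst : MonoidHom.fst _ _ P = _root_.cubeMap T n ε := by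
    simp only [P, _root_.cubeMap, map_list_prod, List.map_map, Function.comp_def, map_zpow]
    rfl
  have hsnd : MonoidHom.snd _ _ P = _root_.cubeMap T' n ε := by
    simp only [P, _root_.cubeMap, map_list_prod, List.map_map, Function.comp_def, map_zpow]
    rfl
  rw [← hfst, ← hsnd]
  exact hP

end Semiconj

lemma List.prod_ofFn_succAbove {M : Type*} [Monoid M] {k : ℕ} (f : Fin (k + 1) → M)
    (i : Fin (k + 1)) (hi : f i = 1) : (List.ofFn f).prod = (List.ofFn (f ∘ i.succAbove)).prod := by
  induction k with
  | zero =>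
    rw [Fin.fin_one_eq_zero i] at hi
    simp [List.ofFn_succ, hi]
  | succ k ih =>
    cases i using Fin.cases with
    | zero => simp [List.ofFn_succ, hi, Function.comp_def]
    | succ j =>
      rw [List.ofFn_succ, List.prod_cons, ih (fun l => f l.succ) j hi,
        List.ofFn_succ (f := f ∘ j.succ.succAbove), List.prod_cons]
      simp [Function.comp_def, Fin.succ_succAbove_succ]

section CubeMap

variable {X : Type*} [TopologicalSpace X] {k : ℕ}

lemma cubeMap_eq_prod_ofFn (T : Fin k → X ≃ₜ X) (n : Fin k → ℤ) (ε : Fin k → Bool) :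
    cubeMap T n ε = (List.ofFn fun j => T j ^ (if ε j then n j else 0)).prod := by
  rw [cubeMap, List.ofFn_eq_map]

@[simp]
lemma cubeMap_zero (T : Fin k → X ≃ₜ X) (ε : Fin k → Bool) : cubeMap T 0 ε = 1 := by
  simp [cubeMap_eq_prod_ofFn]

lemma cubeMap_congr_of_eq_one {T : Fin k → X ≃ₜ X} {ε ε' : Fin k → Bool}
    (h : ∀ j, ε j ≠ ε' j → T j = 1) (n : Fin k → ℤ) : cubeMap T n ε = cubeMap T n ε' := by
  simp only [cubeMap_eq_prod_ofFn]
  congr 2 with j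
  by_cases hj : ε j = ε' j
  · rw [hj]
  · simp [h j hj]

lemma cubeMap_succAbove (T : Fin (k + 1) → X ≃ₜ X) (n : Fin (k + 1) → ℤ) (ε : Fin (k + 1) → Bool)
    {i : Fin (k + 1)} (hi : T i ^ (if ε i then n i else 0) = 1) :
    cubeMap T n ε = cubeMap (T ∘ i.succAbove) (n ∘ i.succAbove) (ε ∘ i.succAbove) := by
  simp only [cubeMap_eq_prod_ofFn]
  exact List.prod_ofFn_succAbove _ i hi

def maskedMaps (T : Fin k → X ≃ₜ X) (η : Fin k → Bool) : Fin k → X ≃ₜ X :=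
  fun j => if η j then T j else 1

lemma cubeMap_maskedMaps (T : Fin k → X ≃ₜ X) (η : Fin k → Bool) (n : Fin k → ℤ) :
    cubeMap (maskedMaps T η) n (fun _ => true) = cubeMap T n η := by
  simp only [cubeMap_eq_prod_ofFn]
  congr 2
  funext j
  cases h : η j <;> simp [maskedMaps, h]

lemma maskedMaps_mem_genGroup (T : Fin k → X ≃ₜ X) (η : Fin k → Bool) (j : Fin k) :
    maskedMaps T η j ∈ genGroup T := by
  unfold maskedMaps
  split_ifs
  · exact Subgroup.subset_closure ⟨j, rfl⟩
  · exact one_mem _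

end CubeMap

section GenGroup

variable {X : Type*} [TopologicalSpace X] {k l : ℕ} {T : Fin k → X ≃ₜ X}

lemma isMulCommutative_genGroup (hT : ∀ i j x, T i (T j x) = T j (T i x)) :
    IsMulCommutative (genGroup T) :=
  Subgroup.isMulCommutative_closure <| by
    rintro _ ⟨i, rfl⟩ _ ⟨j, rfl⟩
    exact Homeomorph.ext (hT i j)

lemma comm_of_forall_mem_genGroup (hT : ∀ i j x, T i (T j x) = T j (T i x)) {F : Fin l → X ≃ₜ X}
    (hF : ∀ j, F j ∈ genGroup T) (i j : Fin l) (x : X) : F i (F j x) = F j (F i x) :=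
  have := isMulCommutative_genGroup hT
  DFunLike.congr_fun (setLike_mul_comm (hF i) (hF j)) x

lemma IsDistalSystem.of_forall_mem_genGroup {X : Type*} [MetricSpace X] {T : Fin k → X ≃ₜ X}
    (hT : IsDistalSystem T) {F : Fin l → X ≃ₜ X} (hF : ∀ j, F j ∈ genGroup T) :
    IsDistalSystem F := by
  have hle : genGroup F ≤ genGroup T := (Subgroup.closure_le _).2 (range_subset_iff.2 hF)
  intro x y hxy
  obtain ⟨δ, hδ, hdist⟩ := hT x y hxy
  exact ⟨δ, hδ, fun g hg => hdist g (hle hg)⟩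

end GenGroup

section Ellis

variable {X : Type*} [TopologicalSpace X] {k : ℕ} {T : Fin k → X ≃ₜ X}

def orbit (T : Fin k → X ≃ₜ X) (x : X) : Set X := {y | ∃ g ∈ genGroup T, g x = y}

def ellisSemigroup (T : Fin k → X ≃ₜ X) : Set (X → X) :=
  closure ((⇑) '' (genGroup T : Set (X ≃ₜ X)))

lemma coe_mem_ellisSemigroup {g : X ≃ₜ X} (hg : g ∈ genGroup T) : ⇑g ∈ ellisSemigroup T :=
  subset_closure ⟨g, hg, rfl⟩

lemma comp_mem_ellisSemigroup {p q : X → X} (hp : p ∈ ellisSemigroup T)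
    (hq : q ∈ ellisSemigroup T) : p ∘ q ∈ ellisSemigroup T := by
  have hleft : ∀ g ∈ genGroup T, ⇑g ∘ q ∈ ellisSemigroup T := fun g hg =>
    map_mem_closure (continuous_pi fun x => g.continuous.comp (continuous_apply x)) hq
      (by rintro _ ⟨h, hh, rfl⟩; exact ⟨g * h, mul_mem hg hh, rfl⟩)
  exact isClosed_closure.closure_subset
    (map_mem_closure (f := (· ∘ q)) (continuous_pi fun x => continuous_apply (q x)) hp
      (by rintro _ ⟨g, hg, rfl⟩; exact hleft g hg))

lemma mapsTo_closure_orbit {g : X ≃ₜ X} (hg : g ∈ genGroup T) (x : X) :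
    MapsTo g (closure (orbit T x)) (closure (orbit T x)) :=
  fun _ hy => map_mem_closure g.continuous hy
    (by rintro _ ⟨h, hh, rfl⟩; exact ⟨g * h, mul_mem hg hh, rfl⟩)

lemma closure_orbit_subset {x y : X} (h : x ∈ closure (orbit T y)) :
    closure (orbit T x) ⊆ closure (orbit T y) :=
  closure_minimal (by rintro _ ⟨g, hg, rfl⟩; exact mapsTo_closure_orbit hg y h) isClosed_closure

lemma closure_orbit_eq_image_ellisSemigroup [CompactSpace X] [T2Space X] (x : X) :
    closure (orbit T x) = (fun f : X → X => f x) '' ellisSemigroup T := by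
  have hcont : Continuous fun f : X → X => f x := continuous_apply x
  rw [ellisSemigroup, ← (hcont.isClosedMap).closure_image_eq_of_continuous hcont, image_image]
  rfl

end Ellis

section Distal

variable {X : Type*} [MetricSpace X] {k : ℕ} {T : Fin k → X ≃ₜ X}

lemma IsDistalSystem.eq_id_of_idempotent (hT : IsDistalSystem T) {u : X → X}
    (hu : u ∈ ellisSemigroup T) (huu : u ∘ u = u) : u = id := by
  funext x
  by_contra hne
  obtain ⟨δ, hδ, hdist⟩ := hT x (u x) (Ne.symm hne)
  have hclosed : IsClosed {f : X → X | δ ≤ dist (f x) (f (u x))} :=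
    isClosed_le continuous_const ((continuous_apply x).dist (continuous_apply (u x)))
  have hδu : δ ≤ dist (u x) (u (u x)) :=
    closure_minimal (by rintro _ ⟨g, hg, rfl⟩; exact hdist g hg) hclosed hu
  rw [← comp_apply (f := u), huu, dist_self] at hδu
  exact hδ.not_ge hδu

/-- In a distal system the orbit-closure relation is symmetric: an idempotent `u = r ∘ p` of the
left ideal `ellisSemigroup T ∘ p` (where `p x = y`) is the identity, so `r y = x`. -/
theorem IsDistalSystem.mem_closure_orbit_symm [CompactSpace X] (hT : IsDistalSystem T) {x y : X}
    (hy : y ∈ closure (orbit T x)) : x ∈ closure (orbit T y) := by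
  rw [closure_orbit_eq_image_ellisSemigroup] at hy ⊢
  obtain ⟨p, hp, rfl⟩ := hy
  -- `Function.End X` is `X → X` with composition as multiplication
  let : TopologicalSpace (Function.End X) := inferInstanceAs (TopologicalSpace (X → X))
  have : T2Space (Function.End X) := inferInstanceAs (T2Space (X → X))
  have hcomp : Continuous fun f : X → X => f ∘ p := continuous_pi fun x => continuous_apply (p x)
  obtain ⟨_, ⟨r, hr, rfl⟩, hu⟩ := exists_idempotent_in_compact_subsemigroup (M := Function.End X)
    (fun q => continuous_pi fun x => continuous_apply (q x)) ((· ∘ p) '' ellisSemigroup T)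
    ⟨p, id, coe_mem_ellisSemigroup (one_mem _), rfl⟩ (isClosed_closure.isCompact.image hcomp)
    (by
      rintro _ ⟨a, ha, rfl⟩ _ ⟨b, hb, rfl⟩
      exact ⟨(a ∘ p) ∘ b, comp_mem_ellisSemigroup (comp_mem_ellisSemigroup ha hp) hb, rfl⟩)
  exact ⟨r, hr, congrFun (hT.eq_id_of_idempotent (comp_mem_ellisSemigroup hr hp) hu) x⟩

end Distal

section Subsystems

variable {k : ℕ}

theorem IsDistalSystem.of_semiconj {Y : Type*} [MetricSpace Y] {T : Fin k → Y ≃ₜ Y} {ι : Type*}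
    {Z : ι → Type*} [∀ κ, MetricSpace (Z κ)] {F : ∀ κ, Fin k → Z κ ≃ₜ Z κ}
    (hF : ∀ κ, IsDistalSystem (F κ)) {e : ∀ κ, Y → Z κ} (he : ∀ κ, LipschitzWith 1 (e κ))
    (hsemi : ∀ κ j, Semiconj (e κ) (T j) (F κ j)) (hsep : ∀ a b, a ≠ b → ∃ κ, e κ a ≠ e κ b) :
    IsDistalSystem T := by
  intro a b hab
  obtain ⟨κ, hκ⟩ := hsep a b hab
  obtain ⟨δ, hδ, hdist⟩ := hF κ _ _ hκ
  refine ⟨δ, hδ, fun g hg => ?_⟩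
  obtain ⟨g', hg', hgg'⟩ := exists_semiconj_of_mem_genGroup (hsemi κ) hg
  calc δ ≤ dist (g' (e κ a)) (g' (e κ b)) := hdist g' hg'
    _ = dist (e κ (g a)) (e κ (g b)) := by rw [hgg' a, hgg' b]
    _ ≤ dist (g a) (g b) := by simpa using (he κ).dist_le_mul (g a) (g b)

theorem IsDistalSystem.exists_minimal_subsystem {W : Type} [MetricSpace W] [CompactSpace W]
    {A : Fin k → W ≃ₜ W} (hcomm : ∀ i j w, A i (A j w) = A j (A i w)) (hA : IsDistalSystem A)
    (w : W) : ∃ (S : ZdSys k) (x : S.X) (e : S.X → W),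
      IsMinimalSystem S.T ∧ Isometry e ∧ e x = w ∧ ∀ j, Semiconj e (S.T j) (A j) := by
  set Y := closure (orbit A w)
  have hA_mem : ∀ j, A j ∈ genGroup A := fun j => Subgroup.subset_closure ⟨j, rfl⟩
  have hY : ∀ j, Y = A j ⁻¹' Y := fun j => Subset.antisymm
    (mapsTo_closure_orbit (hA_mem j) w)
    (fun z hz => by simpa using mapsTo_closure_orbit (inv_mem (hA_mem j)) w hz)
  have : CompactSpace Y := isCompact_iff_compactSpace.1 isClosed_closure.isCompact
  let S : ZdSys k :=
    { X := Y, T := fun j => (A j).sets (hY j), comm := fun i j y => Subtype.ext (hcomm i j y) }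
  have hsemi : ∀ j, Semiconj ((↑) : Y → W) (S.T j) (A j) := fun _ _ => rfl
  refine ⟨S, ⟨w, subset_closure ⟨1, one_mem _, rfl⟩⟩, (↑), fun y => ?_, isometry_subtype_coe,
    rfl, hsemi⟩
  rw [Subtype.dense_iff]
  calc Y ⊆ closure (orbit A y) := closure_orbit_subset (hA.mem_closure_orbit_symm y.2)
    _ ⊆ closure ((↑) '' orbit S.T y) := closure_mono <| by
      rintro _ ⟨g', hg', rfl⟩
      obtain ⟨g, hg, hgg'⟩ := exists_semiconj_of_mem_genGroup_right hsemi hg'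
      exact ⟨g y, ⟨g, hg, rfl⟩, hgg' y⟩

theorem exists_minimal_distal_subsystem_pi {ι : Type} [Fintype ι] {Z : ι → Type}
    [∀ κ, MetricSpace (Z κ)] [∀ κ, CompactSpace (Z κ)] (F : ∀ κ, Fin k → Z κ ≃ₜ Z κ)
    (hcomm : ∀ κ i j z, F κ i (F κ j z) = F κ j (F κ i z)) (hF : ∀ κ, IsDistalSystem (F κ))
    (a : ∀ κ, Z κ) : ∃ (S : ZdSys k) (x : S.X) (e : S.X → ∀ κ, Z κ),
      IsMinimalSystem S.T ∧ IsDistalSystem S.T ∧ Continuous e ∧ Injective e ∧ e x = a ∧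
      ∀ κ j, Semiconj (fun y => e y κ) (S.T j) (F κ j) := by
  let A : Fin k → (∀ κ, Z κ) ≃ₜ (∀ κ, Z κ) := fun j => Homeomorph.piCongrRight fun κ => F κ j
  have hsemi : ∀ κ j, Semiconj (eval κ) (A j) (F κ j) := fun _ _ _ => rfl
  have hA : IsDistalSystem A :=
    .of_semiconj hF (fun κ => LipschitzWith.eval κ) hsemi fun _ _ => Function.ne_iff.1
  obtain ⟨S, x, e, hmin, he, rfl, hSe⟩ :=
    hA.exists_minimal_subsystem (fun i j a => funext fun κ => hcomm κ i j (a κ)) a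
  have hSF : ∀ κ j, Semiconj (fun y => e y κ) (S.T j) (F κ j) :=
    fun κ j => (hsemi κ j).comp_left (hSe j)
  refine ⟨S, x, e, hmin, ?_, he.continuous, he.injective, rfl, hSF⟩
  have hlip : ∀ κ, LipschitzWith 1 fun y => e y κ := fun κ => by
    simpa [Function.comp_def] using (LipschitzWith.eval κ).comp he.lipschitz
  exact .of_semiconj hF hlip hSF
    fun _ _ hne => Function.ne_iff.1 (he.injective.ne hne)

end Subsystems

section Cubes

variable {X : Type*} [TopologicalSpace X] {k : ℕ} {T : Fin k → X ≃ₜ X}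

lemma cubeMap_mem_cubes (T : Fin k → X ≃ₜ X) (n : Fin k → ℤ) (x : X) :
    (fun ε => cubeMap T n ε x) ∈ cubes T :=
  subset_closure ⟨x, n, fun _ => rfl⟩

lemma const_mem_cubes (T : Fin k → X ≃ₜ X) (x : X) : (fun _ => x) ∈ cubes T := by
  simpa using cubeMap_mem_cubes T 0 x

lemma apply_eq_of_mem_cubes {Y : Type*} [TopologicalSpace Y] [T2Space Y] {φ : X → Y}
    (hφ : Continuous φ) {F : Fin k → Y ≃ₜ Y} (hsemi : ∀ j, Semiconj φ (T j) (F j))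
    {ε ε' : Fin k → Bool} (hεε' : ∀ j, ε j ≠ ε' j → F j = 1) {q : (Fin k → Bool) → X}
    (hq : q ∈ cubes T) : φ (q ε) = φ (q ε') := by
  refine closure_minimal ?_ (isClosed_eq (hφ.comp (continuous_apply ε))
    (hφ.comp (continuous_apply ε'))) hq
  rintro q' ⟨x, n, hq'⟩
  change φ (q' ε) = φ (q' ε')
  rw [hq', hq', (Semiconj.cubeMap hsemi n ε).eq, (Semiconj.cubeMap hsemi n ε').eq,
    cubeMap_congr_of_eq_one hεε']

theorem HasUCP.exists_closing_nhds [CompactSpace X] [T2Space X] (hT : HasUCP T) {x : X}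
    {U : Set X} (hU : IsOpen U) (hx : x ∈ U) :
    ∃ V : (Fin k → Bool) → Set X, (∀ ε, IsOpen (V ε) ∧ x ∈ V ε) ∧
      ∀ q ∈ cubes T, (∀ ε, ε ≠ (fun _ => true) → q ε ∈ V ε) → q (fun _ => true) ∈ U := by
  set top : Fin k → Bool := fun _ => true
  have hupdate : Continuous fun q : (Fin k → Bool) → X => update q top x :=
    continuous_id.update top continuous_const
  set L := (fun q => update q top x) '' (cubes T ∩ {q | q top ∈ Uᶜ})
  have hL : IsClosed L := ((isClosed_closure.inter (hU.isClosed_compl.preimage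
    (continuous_apply top))).isCompact.image hupdate).isClosed
  -- By UCP, the only cube with all vertices but `top` at `x` is the constant one.
  have hxL : (fun _ => x) ∉ L := by
    rintro ⟨q, ⟨hq, hqU⟩, hqx⟩
    have := hT q hq _ (const_mem_cubes T x) top fun ε hε => by
      simpa [update_of_ne hε] using congrFun hqx ε
    exact hqU (this ▸ hx)
  obtain ⟨V, hV, hVL⟩ := isOpen_pi_iff'.1 hL.isOpen_compl _ hxL
  refine ⟨V, hV, fun q hq hqV => by_contra fun hqU => ?_⟩
  refine hVL (fun ε _ => ?_) ⟨q, ⟨hq, hqU⟩, rfl⟩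
  by_cases hε : ε = top
  · simpa [hε] using (hV top).2
  · simpa [update_of_ne hε] using hqV ε hε

theorem hasUCP_of_semiconj_pi {Y : Fin k → Type*} [∀ i, TopologicalSpace (Y i)]
    [∀ i, T2Space (Y i)] {e : X → ∀ i, Y i} (he : Continuous e) (he' : Injective e)
    {F : ∀ i, Fin k → Y i ≃ₜ Y i} (hsemi : ∀ i j, Semiconj (fun y => e y i) (T j) (F i j))
    (hF : ∀ i, F i i = 1) : HasUCP T := by
  intro q hq q' hq' ε₀ hagree
  funext ε
  by_cases hε : ε = ε₀
  · subst hε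
    refine he' (funext fun i => ?_)
    -- flipping the `i`-th coordinate does not change the `i`-th component of `e`
    set ε₁ := update ε i (!ε i)
    have hε₁ : ε₁ ≠ ε := fun h => by simpa [ε₁] using congrFun h i
    have hflip : ∀ j, ε j ≠ ε₁ j → F i j = 1 := fun j hj => by
      by_cases hji : j = i
      · rw [hji, hF]
      · exact absurd (update_of_ne hji _ _).symm hj
    have hcont := (continuous_apply i).comp he
    calc e (q ε) i = e (q ε₁) i := apply_eq_of_mem_cubes hcont (hsemi i) hflip hq
      _ = e (q' ε₁) i := by rw [hagree ε₁ hε₁]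
      _ = e (q' ε) i := (apply_eq_of_mem_cubes hcont (hsemi i) hflip hq').symm
  · exact hagree ε hε

end Cubes

section ReturnTimes

variable {k : ℕ}

def IsMinimalDistalReturnTimes (B : Set (Fin k → ℤ)) : Prop :=
  ∃ S : ZdSys k, IsMinimalSystem S.T ∧ IsDistalSystem S.T ∧
    ∃ (x : S.X) (U : Set S.X), IsOpen U ∧ x ∈ U ∧ B = returnTimes S x U

/-- The `(k + 1)`-joining; `n ∘ i.succAbove` is `n` with its `i`-th coordinate deleted. -/
def joining (B : Fin (k + 1) → Set (Fin k → ℤ)) : Set (Fin (k + 1) → ℤ) :=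
  {n | ∀ i, n ∘ i.succAbove ∈ B i}

/-- The system is the orbit closure of the diagonal point of `X^ι`, the `κ`-th factor being acted
on by the face maps `maskedMaps T (η κ)`. -/
theorem isMinimalDistalReturnTimes_faces {X : Type} [MetricSpace X] [CompactSpace X]
    {T : Fin k → X ≃ₜ X} (hcomm : ∀ i j x, T i (T j x) = T j (T i x)) (hT : IsDistalSystem T)
    {ι : Type} [Fintype ι] (η : ι → Fin k → Bool) {x : X} {V : ι → Set X}
    (hV : ∀ κ, IsOpen (V κ)) (hx : ∀ κ, x ∈ V κ) :
    IsMinimalDistalReturnTimes {m | ∀ κ, cubeMap T m (η κ) x ∈ V κ} := by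
  have hF := fun κ => maskedMaps_mem_genGroup T (η κ)
  obtain ⟨S, y, e, hmin, hdist, he, -, hey, hsemi⟩ := exists_minimal_distal_subsystem_pi
    (fun κ => maskedMaps T (η κ)) (fun κ => comm_of_forall_mem_genGroup hcomm (hF κ))
    (fun κ => hT.of_forall_mem_genGroup (hF κ)) fun _ => x
  refine ⟨S, hmin, hdist, y, e ⁻¹' univ.pi V,
    (isOpen_set_pi finite_univ fun κ _ => hV κ).preimage he, by simpa [hey] using hx, ?_⟩
  ext m
  simp only [returnTimes, mem_ofPred_eq, mem_preimage, mem_univ_pi,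
    (Semiconj.cubeMap (hsemi _) m _).eq, hey, cubeMap_maskedMaps]

theorem HasUCP.exists_joining_subset_returnTimes {S : ZdSys (k + 1)} (hdist : IsDistalSystem S.T)
    (hucp : HasUCP S.T) {x : S.X} {U : Set S.X} (hU : IsOpen U) (hx : x ∈ U) :
    ∃ B : Fin (k + 1) → Set (Fin k → ℤ),
      (∀ i, IsMinimalDistalReturnTimes (B i)) ∧ joining B ⊆ returnTimes S x U := by
  obtain ⟨V, hV, hclose⟩ := hucp.exists_closing_nhds hU hx
  refine ⟨fun i => {m | ∀ ε, cubeMap (S.T ∘ i.succAbove) m (ε ∘ i.succAbove) x ∈ V ε},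
    fun i => ?_, fun n hn => ?_⟩
  · have hmem : ∀ j, (S.T ∘ i.succAbove) j ∈ genGroup S.T :=
      fun j => Subgroup.subset_closure ⟨_, rfl⟩
    exact isMinimalDistalReturnTimes_faces (comm_of_forall_mem_genGroup S.comm hmem)
      (hdist.of_forall_mem_genGroup hmem) _ (fun ε => (hV ε).1) fun ε => (hV ε).2
  · refine hclose _ (cubeMap_mem_cubes S.T n x) fun ε hε => ?_
    obtain ⟨i, hi⟩ : ∃ i, ε i = false := by simpa [funext_iff] using hε
    rw [cubeMap_succAbove S.T n ε (i := i) (by simp [hi])]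
    exact hn i ε

theorem exists_hasUCP_returnTimes_subset_joining {B : Fin (k + 1) → Set (Fin k → ℤ)}
    (hB : ∀ i, IsMinimalDistalReturnTimes (B i)) :
    ∃ S : ZdSys (k + 1), IsMinimalSystem S.T ∧ IsDistalSystem S.T ∧ HasUCP S.T ∧
      ∃ (x : S.X) (U : Set S.X), IsOpen U ∧ x ∈ U ∧ returnTimes S x U ⊆ joining B := by
  choose S hmin hdist x U hU hx hB using hB
  let F : ∀ i, Fin (k + 1) → (S i).X ≃ₜ (S i).X := fun i => i.insertNth 1 (S i).T
  have hF : ∀ i j, F i j ∈ genGroup (S i).T := fun i j => by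
    cases j using i.succAboveCases with
    | x =>
      simp only [F, Fin.insertNth_apply_same]
      exact one_mem _
    | p l =>
      simp only [F, Fin.insertNth_apply_succAbove]
      exact Subgroup.subset_closure ⟨l, rfl⟩
  obtain ⟨S', x', e, hmin', hdist', he, he', hex, hsemi⟩ := exists_minimal_distal_subsystem_pi F
    (fun i => comm_of_forall_mem_genGroup (S i).comm (hF i))
    (fun i => (hdist i).of_forall_mem_genGroup (hF i)) x
  refine ⟨S', hmin', hdist', hasUCP_of_semiconj_pi he he' hsemi fun i => by simp [F], x',
    e ⁻¹' univ.pi U, (isOpen_set_pi finite_univ fun i _ => hU i).preimage he,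
    by simpa [hex] using hx, fun n hn i => ?_⟩
  have hni := hn i (mem_univ i)
  rw [(Semiconj.cubeMap (hsemi i) n _).eq, hex, cubeMap_succAbove _ _ _ (i := i) (by simp [F])]
    at hni
  rw [hB i]
  simpa [F, returnTimes] using hni

end ReturnTimes

/-- **Theorem `thm:returntimes`.**  Let `d ≥ 2` (here `d+2` for a natural `d ≥ 0`).  A set
`B ⊆ ℤ^{d+2}` contains a set of return times of a minimal distal `ℤ^{d+2}`-system with the
unique closing parallelepiped property iff `B` contains the `(d+2)`-joining of sets
`B₁,…,B_{d+2} ⊆ ℤ^{d+1}`, each of which is a set of return times of a minimal distal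
`ℤ^{d+1}`-system. -/
theorem return_times_characterization {d : ℕ} (B : Set (Fin (d + 2) → ℤ)) :
    (∃ S : ZdSys (d + 2), IsMinimalSystem S.T ∧ IsDistalSystem S.T ∧ HasUCP S.T ∧
        ∃ (x : S.X) (U : Set S.X), IsOpen U ∧ x ∈ U ∧ returnTimes S x U ⊆ B) ↔
      ∃ Bi : Fin (d + 2) → Set (Fin (d + 1) → ℤ),
        (∀ i : Fin (d + 2),
          ∃ S : ZdSys (d + 1), IsMinimalSystem S.T ∧ IsDistalSystem S.T ∧
            ∃ (x : S.X) (U : Set S.X), IsOpen U ∧ x ∈ U ∧ Bi i = returnTimes S x U) ∧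
        {n : Fin (d + 2) → ℤ |
          ∀ i : Fin (d + 2), (fun l : Fin (d + 1) => n (i.succAbove l)) ∈ Bi i} ⊆ B := by
  constructor
  · rintro ⟨S, -, hdist, hucp, x, U, hU, hx, hUB⟩
    obtain ⟨Bi, hBi, hjoin⟩ := hucp.exists_joining_subset_returnTimes hdist hU hx
    exact ⟨Bi, hBi, hjoin.trans hUB⟩
  · rintro ⟨Bi, hBi, hjoin⟩
    obtain ⟨S, hmin, hdist, hucp, x, U, hU, hx, hret⟩ :=
      exists_hasUCP_returnTimes_subset_joining hBi
    exact ⟨S, hmin, hdist, hucp, x, U, hU, hx, hret.trans hjoin⟩
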